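/- For every real p with 1 < p < ∞ one has the integral identity 2·∫_0^{(p−1)^{1/p}} (1 − t^p/(p−1))^{−1/p} dt = 2·(p−1)^{1/p} · (π/p) / sin(π/p); that is, the two expressions defining the constant π_p agree. -/

import Mathlib

/-!
Scaling `t = (p - 1) ^ (1 / p) * s` and then substituting `s = y ^ (1 / p)` turns the integral
into `(p - 1) ^ (1 / p) / p` times the Beta integral `B(1 / p, 1 - 1 / p) = Γ(1 / p) Γ(1 - 1 / p)`,
which Euler's reflection formula evaluates to `π / sin (π / p)`.
-/

open Real MeasureTheory Set

theorem integral_rpow_mul_one_sub_rpow_eq_Gamma {a b : ℝ} (ha : 0 < a) (hb : 0 < b) :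
    ∫ x in (0 : ℝ)..1, x ^ (a - 1) * (1 - x) ^ (b - 1) = Gamma a * Gamma b / Gamma (a + b) := by
  rw [eq_div_iff (Gamma_pos_of_pos (add_pos ha hb)).ne']
  apply Complex.ofReal_injective
  have hbeta := Complex.Gamma_mul_Gamma_eq_betaIntegral (s := a) (t := b) (by simpa) (by simpa)
  push_cast [← Complex.Gamma_ofReal, hbeta, Complex.betaIntegral, ← intervalIntegral.integral_ofReal]
  rw [mul_comm]
  congr 1
  refine intervalIntegral.integral_congr fun x hx => ?_
  rw [uIcc_of_le zero_le_one] at hx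
  simp only [Complex.ofReal_cpow hx.1, Complex.ofReal_cpow (sub_nonneg.2 hx.2)]
  push_cast
  rfl

-- No integrability hypothesis: `integral_comp_rpow_Ioi_of_pos` holds for Bochner integrals
-- unconditionally, so a divergent side is matched by a divergent (junk `0`) other side.
theorem integral_rpow_mul_one_sub_rpow_rpow {p : ℝ} (hp : 0 < p) (a b : ℝ) :
    ∫ s in (0 : ℝ)..1, s ^ (a - 1) * (1 - s ^ p) ^ (b - 1) =
      p⁻¹ * ∫ y in (0 : ℝ)..1, y ^ (a / p - 1) * (1 - y) ^ (b - 1) := by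
  have hsub := integral_comp_rpow_Ioi_of_pos (hp := hp)
    (g := (Iic 1).indicator fun y => p⁻¹ * (y ^ (a / p - 1) * (1 - y) ^ (b - 1)))
  rw [integral_indicator measurableSet_Iic, Measure.restrict_restrict measurableSet_Iic,
    Iic_inter_Ioi, integral_const_mul] at hsub
  rw [intervalIntegral.integral_of_le zero_le_one, intervalIntegral.integral_of_le zero_le_one,
    ← hsub, ← Iic_inter_Ioi, ← Measure.restrict_restrict measurableSet_Iic,
    ← integral_indicator measurableSet_Iic]
  refine setIntegral_congr_fun measurableSet_Ioi fun x (hx : 0 < x) => ?_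
  have hxp : x ^ p ≤ 1 ↔ x ≤ 1 := by simpa using rpow_le_rpow_iff hx.le zero_le_one hp
  simp only [indicator, mem_Iic, hxp, smul_eq_mul]
  split_ifs
  · have hpow : x ^ (p - 1) * x ^ (a - p) = x ^ (a - 1) := by rw [← rpow_add hx]; ring_nf
    rw [← rpow_mul hx.le, mul_sub, mul_div_cancel₀ _ hp.ne', mul_one, ← hpow]
    field_simp
  · simp

theorem integral_one_sub_rpow_rpow_neg_one_div {p : ℝ} (hp : 1 < p) :
    ∫ s in (0 : ℝ)..1, (1 - s ^ p) ^ (-(1 / p)) = π / p / sin (π / p) := by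
  have hp0 : 0 < p := by linarith
  have hq : 1 / p < 1 := (div_lt_one hp0).2 hp
  have h := integral_rpow_mul_one_sub_rpow_rpow hp0 1 (1 - 1 / p)
  rw [integral_rpow_mul_one_sub_rpow_eq_Gamma (by positivity) (by linarith), add_sub_cancel,
    Gamma_one, div_one, Gamma_mul_Gamma_one_sub] at h
  simp only [sub_self, rpow_zero, one_mul, sub_sub_cancel_left] at h
  rw [h]
  field_simp

theorem integral_one_sub_rpow_div_eq_rpow_mul {p c : ℝ} (hp : 0 < p) (hc : 0 < c) (b : ℝ) :
    ∫ t in (0 : ℝ)..c ^ (1 / p), (1 - t ^ p / c) ^ b =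
      c ^ (1 / p) * ∫ s in (0 : ℝ)..1, (1 - s ^ p) ^ b := by
  have hscale := intervalIntegral.smul_integral_comp_mul_left
    (fun t => (1 - t ^ p / c) ^ b) (c ^ (1 / p)) (a := 0) (b := 1)
  rw [mul_zero, mul_one] at hscale
  rw [← hscale, smul_eq_mul]
  congr 1
  refine intervalIntegral.integral_congr fun s hs => ?_
  rw [uIcc_of_le zero_le_one] at hs
  rw [mul_rpow (by positivity) hs.1, one_div, rpow_inv_rpow hc.le hp.ne',
    mul_div_cancel_left₀ _ hc.ne']

/-- identity (1.9). For `1 < p < ∞`,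
`2 ∫_0^{(p-1)^{1/p}} (1 - t^p/(p-1))^{-1/p} dt = 2 (p-1)^{1/p} (π/p) / sin(π/p)`,
i.e. the two expressions defining the constant `π_p` agree. -/
theorem piP_integral_identity (p : ℝ) (hp : 1 < p) :
    2 * ∫ t in (0 : ℝ)..((p - 1) ^ (1 / p)),
        (1 - t ^ p / (p - 1)) ^ (-(1 / p) : ℝ) =
      2 * (p - 1) ^ (1 / p) * (π / p) / Real.sin (π / p) := by
  rw [integral_one_sub_rpow_div_eq_rpow_mul (by linarith) (by linarith),
    integral_one_sub_rpow_rpow_neg_one_div hp]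
  ring
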